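/- arXiv:1111.4709 — 2 statements merged into one kernel-verified Lean document; each statement's English description precedes it below -/
import Mathlib

section
/- Let 𝒲 be a reduced cyclic word and (P,Q) ∈ 𝕃ℙ₁(𝒲). Then the linear words W₁ and W₂ from the definition of δ₁(P,Q) and δ₂(P,Q) are disjoint occurrences in 𝒲 and both are non-empty; moreover 𝒲 = c(W₁W₂) when (P,Q) has type (1) or (2), and 𝒲 = c(YW₁ȲW₂) when (P,Q) has type (3). -/
open List

namespace CyclicWords

/-- A letter of the alphabet `𝔸ₙ = {a₁,…,aₙ, ā₁,…,āₙ}`: a generator index together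
with a Boolean recording whether the letter is barred. -/
abbrev Letter (n : ℕ) := Bool × Fin n

/-- The involution `x ↦ x̄` on letters. -/
def Letter.bar {n : ℕ} (x : Letter n) : Letter n := (!x.1, x.2)

/-- A linear word: a finite sequence of letters. -/
abbrev Word (n : ℕ) := List (Letter n)

/-- `W̄ = x̄ₘ ⋯ x̄₁ x̄₀` for `W = x₀x₁⋯xₘ`. -/
def Word.bar {n : ℕ} (W : Word n) : Word n := (W.map Letter.bar).reverse

/-- `Wᵏ`, the concatenation of `k` copies of `W`. -/
def wpow {n : ℕ} (W : Word n) (k : ℕ) : Word n := (List.replicate k W).flatten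

/-- A linear word is freely reduced when consecutive letters are never inverse
to each other. -/
def FreelyReduced {n : ℕ} (W : Word n) : Prop :=
  W.Chain' (fun a b => b ≠ Letter.bar a)

/-- A cyclic word: an equivalence class of linear words under cyclic rotation. -/
abbrev CWord (n : ℕ) := Cycle (Letter n)

/-- `c(W)`, the cyclic word represented by the linear word `W`. -/
def cyc {n : ℕ} (W : Word n) : CWord n := ↑W

/-- The length of a cyclic word. -/
def clen {n : ℕ} (𝒲 : CWord n) : ℕ := 𝒲.length

/-- A cyclic word is reduced if it is non-empty and all of its linear
representatives are freely reduced. -/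
def CReduced {n : ℕ} (𝒲 : CWord n) : Prop :=
  𝒲 ≠ Cycle.nil ∧ ∀ W : Word n, cyc W = 𝒲 → FreelyReduced W

/-- `P` is a (linear) subword of the cyclic word `𝒲`, i.e. a linear subword of
one of its linear representatives. -/
def Subword {n : ℕ} (P : Word n) (𝒲 : CWord n) : Prop :=
  ∃ W : Word n, cyc W = 𝒲 ∧ P <:+: W

/-- `P` is a subword of the power `𝒲ʲ`. -/
def SubwordPow {n : ℕ} (P : Word n) (𝒲 : CWord n) (j : ℕ) : Prop :=
  ∃ W : Word n, cyc W = 𝒲 ∧ P <:+: wpow W j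

/-- A surface symbol: a reduced cyclic word in which every letter of `𝔸ₙ`
appears exactly once. -/
def SurfaceSymbol {n : ℕ} (𝒪 : CWord n) : Prop :=
  CReduced 𝒪 ∧ ∃ O : Word n, cyc O = 𝒪 ∧ O.Nodup ∧ ∀ x : Letter n, x ∈ O

/-- `𝒲` is reduced and its (distinct) letters embed into `𝒪` preserving the
cyclic order. -/
def OrientPos {n : ℕ} (𝒪 𝒲 : CWord n) : Prop :=
  CReduced 𝒲 ∧ ∃ W O : Word n, cyc W = 𝒲 ∧ cyc O = 𝒪 ∧ W.Sublist O

/-- `𝒲` is reduced and its (distinct) letters embed into `𝒪` reversing the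
cyclic order. -/
def OrientNeg {n : ℕ} (𝒪 𝒲 : CWord n) : Prop :=
  CReduced 𝒲 ∧ ∃ W O : Word n, cyc W = 𝒲 ∧ cyc O = 𝒪 ∧ W.Sublist O.reverse

open Classical in
/-- The number `o(𝒲) ∈ {-1,0,1}` associated to a cyclic word `𝒲`. -/
noncomputable def o {n : ℕ} (𝒪 𝒲 : CWord n) : ℤ :=
  if OrientPos 𝒪 𝒲 then 1 else if OrientNeg 𝒪 𝒲 then -1 else 0

/-- Condition (1) of the definition of `𝒪`-linked pairs. -/
def LinkedType1 {n : ℕ} (𝒪 : CWord n) (P Q : Word n) : Prop :=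
  ∃ p₁ p₂ q₁ q₂ : Letter n, P = [p₁, p₂] ∧ Q = [q₁, q₂] ∧
    o 𝒪 (cyc [Letter.bar p₁, Letter.bar q₁, p₂, q₂]) ≠ 0

/-- Condition (2) of the definition of `𝒪`-linked pairs (`x₁`, `x₂` denote the
first and last letters of `Y`). -/
def LinkedType2 {n : ℕ} (𝒪 : CWord n) (P Q : Word n) : Prop :=
  ∃ (p₁ p₂ q₁ q₂ : Letter n) (Y : Word n), Y ≠ [] ∧
    P = p₁ :: Y ++ [p₂] ∧ Q = q₁ :: Y ++ [q₂] ∧ p₁ ≠ q₁ ∧ p₂ ≠ q₂ ∧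
    ∀ x₁ x₂ : Letter n, Y.head? = some x₁ → Y.getLast? = some x₂ →
      o 𝒪 (cyc [Letter.bar p₁, Letter.bar q₁, x₁]) = o 𝒪 (cyc [p₂, q₂, Letter.bar x₂])

/-- Condition (3) of the definition of `𝒪`-linked pairs. -/
def LinkedType3 {n : ℕ} (𝒪 : CWord n) (P Q : Word n) : Prop :=
  ∃ (p₁ p₂ q₁ q₂ : Letter n) (Y : Word n), Y ≠ [] ∧
    P = p₁ :: Y ++ [p₂] ∧ Q = q₁ :: Word.bar Y ++ [q₂] ∧
    p₁ ≠ Letter.bar q₂ ∧ p₂ ≠ Letter.bar q₁ ∧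
    ∀ x₁ x₂ : Letter n, Y.head? = some x₁ → Y.getLast? = some x₂ →
      o 𝒪 (cyc [q₂, Letter.bar p₁, x₁]) = o 𝒪 (cyc [Letter.bar q₁, p₂, Letter.bar x₂])

/-- The ordered pair `(P,Q)` is `𝒪`-linked. -/
def IsLinked {n : ℕ} (𝒪 : CWord n) (P Q : Word n) : Prop :=
  FreelyReduced P ∧ FreelyReduced Q ∧ 2 ≤ P.length ∧ 2 ≤ Q.length ∧
    (LinkedType1 𝒪 P Q ∨ LinkedType2 𝒪 P Q ∨ LinkedType3 𝒪 P Q)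

open Classical in
/-- The sign of a linked pair `(P,Q)`. -/
noncomputable def sign {n : ℕ} (𝒪 : CWord n) (P Q : Word n) : ℤ :=
  match P, Q with
  | p₁ :: ps, q₁ :: qs =>
    match ps.getLast?, qs.getLast?, ps.head? with
    | some p₂, some q₂, some x₁ =>
      if LinkedType1 𝒪 (p₁ :: ps) (q₁ :: qs) then
        o 𝒪 (cyc [Letter.bar p₁, Letter.bar q₁, p₂, q₂])
      else if LinkedType2 𝒪 (p₁ :: ps) (q₁ :: qs) then
        o 𝒪 (cyc [Letter.bar p₁, Letter.bar q₁, x₁])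
      else if LinkedType3 𝒪 (p₁ :: ps) (q₁ :: qs) then
        o 𝒪 (cyc [q₂, Letter.bar p₁, x₁])
      else 0
    | _, _, _ => 0
  | _, _ => 0

/-- `𝕃ℙ₁(𝒲)`: `(P,Q)` is an `𝒪`-linked pair of subwords of `𝒲`. -/
def LP1 {n : ℕ} (𝒪 𝒲 : CWord n) (P Q : Word n) : Prop :=
  IsLinked 𝒪 P Q ∧ Subword P 𝒲 ∧ Subword Q 𝒲

/-- `𝕃ℙ₂(𝒱,𝒲)`: `(P,Q)` is an `𝒪`-linked pair with `P` a subword of `𝒱ʲ`,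
`Q` a subword of `𝒲ᵏ` in the appropriate length windows. -/
def LP2 {n : ℕ} (𝒪 𝒱 𝒲 : CWord n) (P Q : Word n) : Prop :=
  IsLinked 𝒪 P Q ∧
    ∃ j k : ℕ, 0 < j ∧ 0 < k ∧ SubwordPow P 𝒱 j ∧ SubwordPow Q 𝒲 k ∧
      (j - 1) * clen 𝒱 < P.length ∧ P.length ≤ j * clen 𝒱 ∧
      (k - 1) * clen 𝒲 < Q.length ∧ Q.length ≤ k * clen 𝒲

/-- The cut data for `δ` when `(P,Q)` has type (1) or (2): two cuts of `𝒲`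
producing `W₁` (starting at the occurrence of `p₂`, the last letter of `P`) and
`W₂` (starting at the occurrence of `q₂`, the last letter of `Q`). -/
def DeltaPair12 {n : ℕ} (𝒪 𝒲 : CWord n) (P Q W₁ W₂ : Word n) : Prop :=
  (LinkedType1 𝒪 P Q ∨ LinkedType2 𝒪 P Q) ∧
  𝒲 = cyc (W₁ ++ W₂) ∧
  (∃ (P' : Word n) (p₂ : Letter n), P = P' ++ [p₂] ∧ W₁.head? = some p₂ ∧
      P' <:+ W₁ ++ W₂) ∧
  (∃ (Q' : Word n) (q₂ : Letter n), Q = Q' ++ [q₂] ∧ W₂.head? = some q₂ ∧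
      Q' <:+ W₂ ++ W₁)

/-- The cut data for `δ` when `(P,Q)` has type (3): `W₁` runs from `p₂` to
`q₁`, and `W₂` from `q₂` to `p₁`. -/
def DeltaPair3 {n : ℕ} (𝒪 𝒲 : CWord n) (P Q W₁ W₂ : Word n) : Prop :=
  LinkedType3 𝒪 P Q ∧
  ∃ (p₁ p₂ q₁ q₂ : Letter n) (Y Y' : Word n), Y ≠ [] ∧ Y' ≠ [] ∧
    P = p₁ :: Y ++ [p₂] ∧ Q = q₁ :: Y' ++ [q₂] ∧
    W₁.head? = some p₂ ∧ W₁.getLast? = some q₁ ∧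
    W₂.head? = some q₂ ∧ W₂.getLast? = some p₁ ∧
    𝒲 = cyc (W₁ ++ Y' ++ W₂ ++ Y)

/-- The words `W₁`, `W₂` obtained by cutting `𝒲` along the linked pair `(P,Q)`. -/
def DeltaPair {n : ℕ} (𝒪 𝒲 : CWord n) (P Q W₁ W₂ : Word n) : Prop :=
  DeltaPair12 𝒪 𝒲 P Q W₁ W₂ ∨ DeltaPair3 𝒪 𝒲 P Q W₁ W₂

open Classical in
/-- A choice of the pair of linear words obtained by cutting `𝒲` along `(P,Q)`. -/
noncomputable def deltaW {n : ℕ} (𝒪 𝒲 : CWord n) (P Q : Word n) : Word n × Word n :=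
  if h : ∃ W : Word n × Word n, DeltaPair 𝒪 𝒲 P Q W.1 W.2 then h.choose else ([], [])

/-- The cyclic word `δ₁(P,Q)`. -/
noncomputable def delta1 {n : ℕ} (𝒪 𝒲 : CWord n) (P Q : Word n) : CWord n :=
  cyc (deltaW 𝒪 𝒲 P Q).1

/-- The cyclic word `δ₂(P,Q)`. -/
noncomputable def delta2 {n : ℕ} (𝒪 𝒲 : CWord n) (P Q : Word n) : CWord n :=
  cyc (deltaW 𝒪 𝒲 P Q).2

/-- `W₁` is the linear representative of `↑W₁` obtained by cutting immediately
before (the occurrence of) the last letter of `P`: `P` occurs (in a power)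
ending exactly at the cut. -/
def CutEnds {n : ℕ} (W₁ P : Word n) : Prop :=
  ∃ (P' : Word n) (p₂ : Letter n) (j : ℕ),
    P = P' ++ [p₂] ∧ W₁.head? = some p₂ ∧ P' <:+ wpow W₁ j

/-- The data for `γ(P,Q)` when `(P,Q) ∈ 𝕃ℙ₂(𝒱,𝒲)` has type (1) or (2):
`γ(P,Q) = c(V₁W₁)` where `V₁`, `W₁` are the representatives of `𝒱`, `𝒲` obtained
by cutting immediately before `p₂`, resp. `q₂`. -/
def GammaPair12 {n : ℕ} (𝒪 𝒱 𝒲 : CWord n) (P Q : Word n) (G : CWord n) : Prop :=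
  (LinkedType1 𝒪 P Q ∨ LinkedType2 𝒪 P Q) ∧
  ∃ V₁ W₁ : Word n, cyc V₁ = 𝒱 ∧ cyc W₁ = 𝒲 ∧ CutEnds V₁ P ∧ CutEnds W₁ Q ∧
    G = cyc (V₁ ++ W₁)

/-- The data for `γ(P,Q)` when `(P,Q) ∈ 𝕃ℙ₂(𝒱,𝒲)` has type (3):
`V₁` is the subword of `𝒱` starting right after the end of `Y` and ending right
before the first letter of `Y` (whose footprint in `𝒱` is the arc `U`), and
similarly `W₁` for `Ȳ` in `𝒲`; then `γ(P,Q) = c(V₁W₁)`. -/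
def GammaPair3 {n : ℕ} (𝒪 𝒱 𝒲 : CWord n) (P Q : Word n) (G : CWord n) : Prop :=
  LinkedType3 𝒪 P Q ∧
  ∃ (p₁ p₂ q₁ q₂ : Letter n) (Y V₁ W₁ U U' : Word n) (j k : ℕ),
    P = p₁ :: Y ++ [p₂] ∧ Q = q₁ :: Word.bar Y ++ [q₂] ∧
    V₁.head? = some p₂ ∧ V₁.getLast? = some p₁ ∧
    W₁.head? = some q₂ ∧ W₁.getLast? = some q₁ ∧
    𝒱 = cyc (U ++ V₁) ∧ Y <+: wpow (U ++ V₁) j ∧ Y.length % clen 𝒱 = U.length ∧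
    𝒲 = cyc (U' ++ W₁) ∧ Word.bar Y <+: wpow (U' ++ W₁) k ∧
      (Word.bar Y).length % clen 𝒲 = U'.length ∧
    G = cyc (V₁ ++ W₁)

/-- `G` is the cyclic word `γ(P,Q)` associated to `(P,Q) ∈ 𝕃ℙ₂(𝒱,𝒲)`. -/
def GammaPair {n : ℕ} (𝒪 𝒱 𝒲 : CWord n) (P Q : Word n) (G : CWord n) : Prop :=
  GammaPair12 𝒪 𝒱 𝒲 P Q G ∨ GammaPair3 𝒪 𝒱 𝒲 P Q G

open Classical in
/-- A choice of the cyclic word `γ(P,Q)` for `(P,Q) ∈ 𝕃ℙ₂(𝒱,𝒲)`. -/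
noncomputable def gamma {n : ℕ} (𝒪 𝒱 𝒲 : CWord n) (P Q : Word n) : CWord n :=
  if h : ∃ G : CWord n, GammaPair 𝒪 𝒱 𝒲 P Q G then h.choose else Cycle.nil

/-- The set of non-empty reduced cyclic words, the basis of `𝕍`. -/
def RedCyc (n : ℕ) := {𝒲 : CWord n // CReduced 𝒲}

instance {n : ℕ} [NeZero n] : Inhabited (RedCyc n) :=
  ⟨⟨cyc [default], by
    constructor
    · intro h
      have h' : ([(default : Letter n)] : Word n) = [] := (Cycle.coe_eq_nil _).mp h
      simp at h'
    · intro W hW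
      have h1 : W ~r [(default : Letter n)] := Cycle.coe_eq_coe.mp hW
      have h2 : W = [(default : Letter n)] := List.perm_singleton.mp h1.perm
      rw [h2]
      exact List.isChain_singleton _⟩⟩

open Classical in
/-- View a cyclic word as a basis element of `𝕍` (junk value if not reduced). -/
noncomputable def toRed {n : ℕ} [NeZero n] (c : CWord n) : RedCyc n :=
  if h : CReduced c then ⟨c, h⟩ else default

/-!
Both occurrences are turned into linear representatives of `𝒲` that begin right after them.
For types (1) and (2) the two representatives differ, since equal ones would force `p₁ = q₁`;
so they are proper rotations of each other, and this cuts `𝒲` into two non-empty words.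
For type (3) write `𝒲 = c(YA) = c(ȲA')`. The occurrence of `Ȳ` cannot overlap the one of `Y`:
a non-empty common piece `S` would satisfy `S̄ = S`, impossible in a freely reduced word. Nor
can it abut `Y`, as then `p₂ = q̄₁` or `p₁ = q̄₂`. Hence `A = W₁ȲW₂` with `W₁`, `W₂` non-empty.
-/

section Words

variable {n : ℕ}

@[simp] lemma Letter.bar_bar (x : Letter n) : x.bar.bar = x := by
  simp [Letter.bar]

lemma Letter.bar_ne_self (x : Letter n) : x.bar ≠ x := by
  simp [Letter.bar, Prod.ext_iff]

@[simp] lemma Word.length_bar (Y : Word n) : (Word.bar Y).length = Y.length := by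
  simp [Word.bar]

@[simp] lemma Word.bar_append (X Y : Word n) :
    Word.bar (X ++ Y) = Word.bar Y ++ Word.bar X := by
  simp [Word.bar]

@[simp] lemma Word.bar_eq_nil {Y : Word n} : Word.bar Y = [] ↔ Y = [] := by
  simp [Word.bar]

@[simp] lemma Word.head?_bar (Y : Word n) : (Word.bar Y).head? = Y.getLast?.map Letter.bar := by
  simp [Word.bar, List.head?_reverse, List.getLast?_map]

@[simp] lemma Word.getLast?_bar (Y : Word n) :
    (Word.bar Y).getLast? = Y.head?.map Letter.bar := by
  simp [Word.bar, List.getLast?_reverse]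

lemma Word.getElem?_bar (Y : Word n) {i : ℕ} (hi : i < Y.length) :
    (Word.bar Y)[i]? = Y[Y.length - 1 - i]?.map Letter.bar := by
  rw [Word.bar, List.getElem?_reverse (by simpa using hi), List.getElem?_map, List.length_map]

lemma Word.IsSuffix.bar {X Y : Word n} (h : X <:+ Y) : Word.bar X <+: Word.bar Y := by
  obtain ⟨T, rfl⟩ := h
  simp

lemma Word.IsPrefix.bar {X Y : Word n} (h : X <+: Y) : Word.bar X <:+ Word.bar Y := by
  obtain ⟨T, rfl⟩ := h
  simp

lemma FreelyReduced.infix {X Y : Word n} (hY : FreelyReduced Y) (h : X <:+: Y) :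
    FreelyReduced X :=
  List.IsChain.infix hY h

/-- The letter at the centre of a word equal to its own inverse is either fixed by the bar
(odd length) or cancels against its neighbour (even length). -/
lemma FreelyReduced.bar_ne_self {Y : Word n} (hY : FreelyReduced Y) (hne : Y ≠ []) :
    Word.bar Y ≠ Y := by
  intro h
  have hsym : ∀ i, i < Y.length → Y[i]? = Y[Y.length - 1 - i]?.map Letter.bar := by
    intro i hi
    rw [← Word.getElem?_bar Y hi, h]
  have hpos := List.length_pos_iff.mpr hne
  obtain ⟨k, hk | hk⟩ := Nat.even_or_odd' Y.length
  · have hmid := hsym (k - 1) (by omega)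
    rw [show Y.length - 1 - (k - 1) = k - 1 + 1 by omega, List.getElem?_eq_getElem (by omega),
      List.getElem?_eq_getElem (by omega)] at hmid
    have hchain := List.isChain_iff_getElem.mp hY (k - 1) (by omega)
    simp only [Option.map_some, Option.some_inj] at hmid
    exact hchain (by rw [hmid, Letter.bar_bar])
  · have hmid := hsym k (by omega)
    rw [show Y.length - 1 - k = k by omega, List.getElem?_eq_getElem (by omega)] at hmid
    simp only [Option.map_some, Option.some_inj] at hmid
    exact Letter.bar_ne_self _ hmid.symm

lemma FreelyReduced.not_prefix_bar_of_suffix {S Y : Word n} (hY : FreelyReduced Y)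
    (hS : S ≠ []) (hsuf : S <:+ Y) : ¬ S <+: Word.bar Y := fun hpre =>
  (hY.infix hsuf.isInfix).bar_ne_self hS
    ((List.prefix_of_prefix_length_le (Word.IsSuffix.bar hsuf) hpre (by simp)).eq_of_length
      (by simp))

lemma FreelyReduced.not_suffix_bar_of_prefix {S Y : Word n} (hY : FreelyReduced Y)
    (hS : S ≠ []) (hpre : S <+: Y) : ¬ S <:+ Word.bar Y := fun hsuf =>
  (hY.infix hpre.isInfix).bar_ne_self hS
    ((List.suffix_of_suffix_length_le (Word.IsPrefix.bar hpre) hsuf (by simp)).eq_of_length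
      (by simp))

end Words

section Cyclic

variable {n : ℕ}

lemma cyc_eq_cyc_iff {U V : Word n} : cyc U = cyc V ↔ U ~r V :=
  Cycle.coe_eq_coe

lemma cyc_append_comm (U V : Word n) : cyc (U ++ V) = cyc (V ++ U) :=
  cyc_eq_cyc_iff.mpr List.isRotated_append

lemma exists_append_eq_of_cyc_eq {U V : Word n} (h : cyc U = cyc V) :
    ∃ X Z : Word n, U = X ++ Z ∧ V = Z ++ X := by
  obtain ⟨k, hk, rfl⟩ := List.isRotated_iff_mod.mp (cyc_eq_cyc_iff.mp h)
  exact ⟨U.take k, U.drop k, (List.take_append_drop k U).symm,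
    List.rotate_eq_drop_append_take hk⟩

lemma exists_ne_nil_of_cyc_eq_of_ne {U V : Word n} (h : cyc U = cyc V) (hne : U ≠ V) :
    ∃ W₁ W₂ : Word n, W₁ ≠ [] ∧ W₂ ≠ [] ∧ U = W₁ ++ W₂ ∧ V = W₂ ++ W₁ := by
  obtain ⟨X, Z, rfl, rfl⟩ := exists_append_eq_of_cyc_eq h
  refine ⟨X, Z, ?_, ?_, rfl, rfl⟩ <;> rintro rfl <;> simp at hne

lemma Subword.exists_cyc_append {P : Word n} {𝒲 : CWord n} (h : Subword P 𝒲) :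
    ∃ R : Word n, 𝒲 = cyc (P ++ R) := by
  obtain ⟨W, rfl, S, T, rfl⟩ := h
  exact ⟨T ++ S, by simpa using cyc_append_comm S (P ++ T)⟩

/-- A surface symbol has no repeated letter, so neither has anything that embeds into it. -/
lemma o_eq_zero_of_not_nodup {𝒪 : CWord n} (h𝒪 : SurfaceSymbol 𝒪) {W : Word n}
    (hW : ¬ W.Nodup) : o 𝒪 (cyc W) = 0 := by
  obtain ⟨-, O₀, hO₀, hnd, -⟩ := h𝒪
  have hO : ∀ O : Word n, cyc O = 𝒪 → O.Nodup := fun O hO =>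
    (cyc_eq_cyc_iff.mp (hO.trans hO₀.symm)).nodup_iff.mpr hnd
  have hV : ∀ V : Word n, cyc V = cyc W → ¬ V.Nodup := fun V hV hVnd =>
    hW ((cyc_eq_cyc_iff.mp hV).nodup_iff.mp hVnd)
  have hpos : ¬ OrientPos 𝒪 (cyc W) := fun ⟨_, V, O, hVc, hOc, hVO⟩ =>
    hV V hVc (hVO.nodup (hO O hOc))
  have hneg : ¬ OrientNeg 𝒪 (cyc W) := fun ⟨_, V, O, hVc, hOc, hVO⟩ =>
    hV V hVc (hVO.nodup (List.nodup_reverse.mpr (hO O hOc)))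
  simp [o, hpos, hneg]

end Cyclic

section Overlap

variable {n : ℕ}

lemma eq_bar_of_append_eq_bar_append {Y A A' : Word n} {p q : Letter n}
    (h : A ++ Y = Word.bar Y ++ A') (hY : Y ≠ []) (hA : A.head? = some p)
    (hA' : A'.getLast? = some q) : p = q.bar := by
  have hhead := congrArg List.head? h
  have hlast := congrArg List.getLast? h
  simp only [List.head?_append, List.getLast?_append, Word.head?_bar, Word.getLast?_bar, hA,
    hA'] at hhead hlast
  simp_all

lemma eq_bar_of_append_eq_append_bar {Y A A' : Word n} {p q : Letter n}
    (h : Y ++ A = A' ++ Word.bar Y) (hY : Y ≠ []) (hA : A.getLast? = some p)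
    (hA' : A'.head? = some q) : p = q.bar := by
  have hhead := congrArg List.head? h
  have hlast := congrArg List.getLast? h
  simp only [List.head?_append, List.getLast?_append, Word.head?_bar, Word.getLast?_bar, hA,
    hA'] at hhead hlast
  simp_all

theorem exists_eq_append_bar_append {Y A A' : Word n} {p₁ p₂ q₁ q₂ : Letter n}
    (hY : FreelyReduced Y) (hY₀ : Y ≠ []) (h : cyc (Y ++ A) = cyc (Word.bar Y ++ A'))
    (hA₁ : A.head? = some p₂) (hA₂ : A.getLast? = some p₁)
    (hA'₁ : A'.head? = some q₂) (hA'₂ : A'.getLast? = some q₁)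
    (h₁ : p₁ ≠ q₂.bar) (h₂ : p₂ ≠ q₁.bar) :
    ∃ W₁ W₂ : Word n, W₁ ≠ [] ∧ W₂ ≠ [] ∧
      A = W₁ ++ Word.bar Y ++ W₂ ∧ A' = W₂ ++ Y ++ W₁ := by
  obtain ⟨X, Z, hXZ, hZX⟩ := exists_append_eq_of_cyc_eq h
  rcases List.append_eq_append_iff.mp hXZ with ⟨W₁, rfl, rfl⟩ | ⟨T, rfl, rfl⟩
  · rcases List.append_eq_append_iff.mp hZX with ⟨W₂, rfl, hA'⟩ | ⟨T, hT, hA'⟩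
    · refine ⟨W₁, W₂, ?_, ?_, by simp, by simp [hA']⟩
      · rintro rfl
        exact h₂ (eq_bar_of_append_eq_bar_append (by simp [hA']) hY₀ hA₁ hA'₂)
      · rintro rfl
        exact h₁ (eq_bar_of_append_eq_append_bar (by simp [hA']) hY₀ hA₂ hA'₁)
    · exfalso
      by_cases hT₀ : T = []
      · subst hT₀
        exact h₁ (eq_bar_of_append_eq_append_bar (by simp_all) hY₀ hA₂ hA'₁)
      · have hpre : T <+: Y := List.prefix_of_prefix_length_le (hA' ▸ List.prefix_append T A')
          (List.prefix_append Y W₁) (by simp [← Word.length_bar Y, hT])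
        exact hY.not_suffix_bar_of_prefix hT₀ hpre ⟨Z, hT.symm⟩
  · exfalso
    by_cases hT₀ : T = []
    · subst hT₀
      exact h₂ (eq_bar_of_append_eq_bar_append (by simp_all) hY₀ hA₁ hA'₂)
    · have hpre : T <+: Word.bar (X ++ T) := List.prefix_of_prefix_length_le
        (hZX ▸ List.append_assoc T A X ▸ List.prefix_append T (A ++ X))
        (List.prefix_append _ A') (by simp)
      exact hY.not_prefix_bar_of_suffix hT₀ (List.suffix_append X T) hpre

end Overlap

section Delta

variable {n : ℕ} {𝒪 𝒲 : CWord n} {P Q : Word n}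

lemma eq_of_cons_append_singleton_eq {x x' y y' : Letter n} {Y Y' : Word n}
    (h : x :: Y ++ [y] = x' :: Y' ++ [y']) : Y = Y' := by
  simpa using congrArg (fun l => l.tail.dropLast) h

lemma LinkedType3.not_linkedType1 (h₃ : LinkedType3 𝒪 P Q) : ¬ LinkedType1 𝒪 P Q := by
  rintro ⟨_, _, _, _, rfl, -, -⟩
  obtain ⟨_, _, _, _, Y, hY, hP, -⟩ := h₃
  exact hY (by simpa using congrArg List.length hP)

lemma LinkedType3.not_linkedType2 (hP : FreelyReduced P) (h₃ : LinkedType3 𝒪 P Q) :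
    ¬ LinkedType2 𝒪 P Q := by
  rintro ⟨p₁, p₂, _, _, Y, hY, rfl, rfl, -⟩
  obtain ⟨_, _, _, _, Y', -, hP', hQ', -⟩ := h₃
  cases eq_of_cons_append_singleton_eq hP'
  exact (hP.infix ⟨[p₁], [p₂], by simp⟩).bar_ne_self hY
    (eq_of_cons_append_singleton_eq hQ').symm

lemma exists_deltaPair12 {P' Q' : Word n} {p₂ q₂ : Letter n}
    (hT : LinkedType1 𝒪 P Q ∨ LinkedType2 𝒪 P Q) (hP : P = P' ++ [p₂]) (hQ : Q = Q' ++ [q₂])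
    (hlen : P'.length = Q'.length) (hPQ : P' ≠ Q') (hPs : Subword P 𝒲) (hQs : Subword Q 𝒲) :
    ∃ W₁ W₂ : Word n, DeltaPair12 𝒪 𝒲 P Q W₁ W₂ := by
  obtain ⟨R, hR⟩ := hPs.exists_cyc_append
  obtain ⟨S, hS⟩ := hQs.exists_cyc_append
  have hU : 𝒲 = cyc (p₂ :: R ++ P') := by
    rw [hR, hP, List.append_assoc, cyc_append_comm]
    rfl
  have hV : 𝒲 = cyc (q₂ :: S ++ Q') := by
    rw [hS, hQ, List.append_assoc, cyc_append_comm]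
    rfl
  have hUV : p₂ :: R ++ P' ≠ q₂ :: S ++ Q' := by
    intro h
    have hQ'suf : Q' <:+ p₂ :: R ++ P' := h ▸ List.suffix_append _ _
    exact hPQ ((List.suffix_of_suffix_length_le (List.suffix_append _ _) hQ'suf
      hlen.le).eq_of_length hlen)
  obtain ⟨W₁, W₂, hW₁, hW₂, hU', hV'⟩ := exists_ne_nil_of_cyc_eq_of_ne (hU.symm.trans hV) hUV
  refine ⟨W₁, W₂, hT, hU' ▸ hU, ⟨P', p₂, hP, ?_, hU' ▸ List.suffix_append _ _⟩,
    ⟨Q', q₂, hQ, ?_, hV' ▸ List.suffix_append _ _⟩⟩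
  · simpa [List.head?_append_of_ne_nil _ hW₁] using (congrArg List.head? hU').symm
  · simpa [List.head?_append_of_ne_nil _ hW₂] using (congrArg List.head? hV').symm

lemma exists_deltaPair3 (hP : FreelyReduced P) (h₃ : LinkedType3 𝒪 P Q)
    (hPs : Subword P 𝒲) (hQs : Subword Q 𝒲) :
    ∃ W₁ W₂ : Word n, DeltaPair3 𝒪 𝒲 P Q W₁ W₂ := by
  obtain ⟨p₁, p₂, q₁, q₂, Y, hY₀, rfl, rfl, h₁, h₂, -⟩ := id h₃
  obtain ⟨R, hR⟩ := hPs.exists_cyc_append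
  obtain ⟨S, hS⟩ := hQs.exists_cyc_append
  have hU : 𝒲 = cyc (Y ++ (p₂ :: R ++ [p₁])) := by
    simpa [cyc] using hR.trans (cyc_append_comm [p₁] _)
  have hV : 𝒲 = cyc (Word.bar Y ++ (q₂ :: S ++ [q₁])) := by
    simpa [cyc] using hS.trans (cyc_append_comm [q₁] _)
  obtain ⟨W₁, W₂, hW₁, hW₂, hA, hA'⟩ := exists_eq_append_bar_append
    (hP.infix ⟨[p₁], [p₂], by simp⟩) hY₀ (hU.symm.trans hV) (by simp) (List.getLast?_concat ..)
    (by simp) (List.getLast?_concat ..) h₁ h₂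
  have e₁ : W₁.head? = some p₂ := by
    simpa [List.head?_append_of_ne_nil _ hW₁] using (congrArg List.head? hA).symm
  have e₂ : W₂.getLast? = some p₁ := by
    rw [← List.getLast?_append_of_ne_nil (W₁ ++ Word.bar Y) hW₂, ← hA]
    exact List.getLast?_concat ..
  have e₃ : W₂.head? = some q₂ := by
    simpa [List.head?_append_of_ne_nil _ hW₂] using (congrArg List.head? hA').symm
  have e₄ : W₁.getLast? = some q₁ := by
    rw [← List.getLast?_append_of_ne_nil (W₂ ++ Y) hW₁, ← hA']
    exact List.getLast?_concat ..
  refine ⟨W₁, W₂, h₃, p₁, p₂, q₁, q₂, Y, Word.bar Y, hY₀, by simpa using hY₀, rfl, rfl,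
    e₁, e₄, e₃, e₂, ?_⟩
  rw [hU, cyc_append_comm, hA]

lemma DeltaPair.left_ne_nil {W₁ W₂ : Word n} (h : DeltaPair 𝒪 𝒲 P Q W₁ W₂) : W₁ ≠ [] := by
  rintro rfl
  rcases h with ⟨-, -, ⟨_, _, -, h, -⟩, -⟩ | ⟨-, _, _, _, _, _, _, -, -, -, -, h, -⟩ <;> simp at h

lemma DeltaPair.right_ne_nil {W₁ W₂ : Word n} (h : DeltaPair 𝒪 𝒲 P Q W₁ W₂) : W₂ ≠ [] := by
  rintro rfl
  rcases h with ⟨-, -, -, ⟨_, _, -, h, -⟩⟩ | ⟨-, _, _, _, _, _, _, -, -, -, -, -, -, h, -⟩ <;>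
    simp at h

lemma DeltaPair3.exists_cyc_eq {W₁ W₂ : Word n} (h : DeltaPair3 𝒪 𝒲 P Q W₁ W₂) :
    ∃ Y : Word n, 𝒲 = cyc (Y ++ W₁ ++ Word.bar Y ++ W₂) := by
  obtain ⟨⟨_, _, _, _, Y, -, hP, hQ, -⟩, _, _, _, _, Y₀, Y', -, -, hP', hQ', -, -, -, -, h⟩ := h
  obtain rfl := eq_of_cons_append_singleton_eq (hP.symm.trans hP')
  obtain rfl := eq_of_cons_append_singleton_eq (hQ.symm.trans hQ')
  refine ⟨Y, ?_⟩
  rw [h, cyc_append_comm]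
  simp

end Delta

theorem delta_words_nonempty_and_decomposition_general (n : ℕ) (𝒪 : CWord n)
    (h𝒪 : SurfaceSymbol 𝒪) (𝒲 : CWord n)
    (P Q : Word n) (h : LP1 𝒪 𝒲 P Q) :
    (∃ W₁ W₂ : Word n, DeltaPair 𝒪 𝒲 P Q W₁ W₂) ∧
    ∀ W₁ W₂ : Word n, DeltaPair 𝒪 𝒲 P Q W₁ W₂ →
      W₁ ≠ [] ∧ W₂ ≠ [] ∧
      ((LinkedType1 𝒪 P Q ∨ LinkedType2 𝒪 P Q) → 𝒲 = cyc (W₁ ++ W₂)) ∧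
      (LinkedType3 𝒪 P Q →
        ∃ Y : Word n, 𝒲 = cyc (Y ++ W₁ ++ Word.bar Y ++ W₂)) := by
  obtain ⟨⟨hP, -, -, -, hT⟩, hPs, hQs⟩ := h
  have not_type12 : LinkedType3 𝒪 P Q → ¬ (LinkedType1 𝒪 P Q ∨ LinkedType2 𝒪 P Q) :=
    fun h₃ h₁₂ => h₁₂.elim h₃.not_linkedType1 (h₃.not_linkedType2 hP)
  refine ⟨?_, fun W₁ W₂ hδ => ⟨hδ.left_ne_nil, hδ.right_ne_nil, ?_⟩⟩
  · rcases hT with h₁ | h₂ | h₃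
    · obtain ⟨p₁, p₂, q₁, q₂, hP', hQ', ho⟩ := id h₁
      have hpq : p₁ ≠ q₁ := by
        rintro rfl
        exact ho (o_eq_zero_of_not_nodup h𝒪 (by simp))
      obtain ⟨W₁, W₂, hδ⟩ := exists_deltaPair12 (P' := [p₁]) (Q' := [q₁]) (Or.inl h₁)
        hP' hQ' rfl (by simpa using hpq) hPs hQs
      exact ⟨W₁, W₂, Or.inl hδ⟩
    · obtain ⟨p₁, p₂, q₁, q₂, Y, -, hP', hQ', hpq, -⟩ := id h₂
      obtain ⟨W₁, W₂, hδ⟩ := exists_deltaPair12 (Or.inr h₂) hP' hQ' (by simp)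
        (by simpa using hpq) hPs hQs
      exact ⟨W₁, W₂, Or.inl hδ⟩
    · obtain ⟨W₁, W₂, hδ⟩ := exists_deltaPair3 hP h₃ hPs hQs
      exact ⟨W₁, W₂, Or.inr hδ⟩
  · rcases hδ with hδ | hδ
    · exact ⟨fun _ => hδ.2.1, fun h₃ => absurd hδ.1 (not_type12 h₃)⟩
    · exact ⟨fun h₁₂ => absurd h₁₂ (not_type12 hδ.1), fun _ => hδ.exists_cyc_eq⟩

/-- For `(P,Q) ∈ 𝕃ℙ₁(𝒲)` the words `W₁`, `W₂` of the definition
of `δ₁`, `δ₂` exist, are disjoint occurrences and are non-empty; moreover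
`𝒲 = c(W₁W₂)` for types (1),(2) and `𝒲 = c(YW₁ȲW₂)` for type (3). -/
theorem delta_words_nonempty_and_decomposition (n : ℕ) (𝒪 : CWord n)
    (h𝒪 : SurfaceSymbol 𝒪) (𝒲 : CWord n) (hW : CReduced 𝒲)
    (P Q : Word n) (h : LP1 𝒪 𝒲 P Q) :
    (∃ W₁ W₂ : Word n, DeltaPair 𝒪 𝒲 P Q W₁ W₂) ∧
    ∀ W₁ W₂ : Word n, DeltaPair 𝒪 𝒲 P Q W₁ W₂ →
      W₁ ≠ [] ∧ W₂ ≠ [] ∧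
      ((LinkedType1 𝒪 P Q ∨ LinkedType2 𝒪 P Q) → 𝒲 = cyc (W₁ ++ W₂)) ∧
      (LinkedType3 𝒪 P Q →
        ∃ Y : Word n, 𝒲 = cyc (Y ++ W₁ ++ Word.bar Y ++ W₂)) :=
  delta_words_nonempty_and_decomposition_general n 𝒪 h𝒪 𝒲 P Q h

end CyclicWords
end

section
/- Let 𝒱 and 𝒲 be reduced cyclic words and (P,Q) ∈ 𝕃ℙ₂(𝒱,𝒲). Then the positive integers j and k with P an occurrence of a subword of 𝒱ʲ, Q an occurrence of a subword of 𝒲ᵏ, l(𝒱^{j−1}) < l(P) ≤ l(𝒱ʲ) and l(𝒲^{k−1}) < l(Q) ≤ l(𝒲ᵏ) can be chosen so that j ≤ 2 + l(𝒲)/l(𝒱) and k ≤ 2 + l(𝒱)/l(𝒲). -/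
/-! If `P` occurs in a power of `𝒱`, it has period `a = l(𝒱)`; likewise `Q` has period
`b = l(𝒲)`. In a linked pair of type (2), `P = p₁Yp₂` and `Q = q₁Yq₂` share the middle `Y` but
`p₂ ≠ q₂`; in type (3) the same holds for `P` and `Q̄ = q̄₂Yq̄₁`. Two words with periods `a` and `b`
that agree on `a + b` consecutive letters agree on the next one (go back `a` steps in one word and
forward `b` in the other), so `l(Y) < a + b`, i.e. `l(P) = l(Q) ≤ a + b + 1`. The length windows
`(j - 1)a < l(P)` and `(k - 1)b < l(Q)` then give the bounds on `j` and `k`. -/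

open List

namespace List

variable {α : Type*}

theorem HasPeriod.reverse {w : List α} {p : ℕ} (h : w.HasPeriod p) : w.reverse.HasPeriod p := by
  rw [hasPeriod_iff_getElem?] at h ⊢
  intro i hi
  rw [length_reverse] at hi
  rw [getElem?_reverse (by omega), getElem?_reverse (by omega),
    h (w.length - 1 - (i + p)) (by omega),
    show w.length - 1 - (i + p) + p = w.length - 1 - i by omega]

theorem HasPeriod.map {β : Type*} {w : List α} {p : ℕ} (f : α → β) (h : w.HasPeriod p) :
    (w.map f).HasPeriod p := by
  rw [hasPeriod_iff_getElem?] at h ⊢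
  intro i hi
  rw [length_map] at hi
  simp only [getElem?_map, h i hi]

theorem hasPeriod_flatten_replicate (l : List α) (j : ℕ) :
    (replicate j l).flatten.HasPeriod l.length := by
  rcases j with _ | j
  · simp
  set w := (replicate j l).flatten
  have append_left : (replicate (j + 1) l).flatten = l ++ w := by simp [w, replicate_succ]
  have append_right : (replicate (j + 1) l).flatten = w ++ l := by simp [w, replicate_succ']
  rw [hasPeriod_iff_getElem?]
  intro i hi
  rw [append_right, length_append, Nat.add_sub_cancel] at hi
  calc _ = (w ++ l)[i]? := by rw [append_right]
    _ = w[i]? := getElem?_append_left hi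
    _ = (l ++ w)[i + l.length]? := by rw [getElem?_append_right (by omega), Nat.add_sub_cancel]
    _ = _ := by rw [append_left]

theorem HasPeriod.getElem?_length_sub_eq {w : List α} {p q : ℕ} (hp : w.HasPeriod p)
    (hq : w.HasPeriod q) (p_pos : 0 < p) (q_pos : 0 < q) (h : p + q ≤ w.length) :
    w[w.length - p]? = w[w.length - q]? := by
  rw [hasPeriod_iff_getElem?] at hp hq
  have hp' := hp (w.length - p - q) (by omega)
  have hq' := hq (w.length - p - q) (by omega)
  rw [show w.length - p - q + p = w.length - q by omega] at hp'
  rw [show w.length - p - q + q = w.length - p by omega] at hq'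
  rw [← hp', hq']

theorem HasPeriod.getElem?_length_sub_of_append_singleton {w : List α} {y : α} {p : ℕ}
    (h : (w ++ [y]).HasPeriod p) (p_pos : 0 < p) (hp : p ≤ w.length) :
    w[w.length - p]? = some y := by
  rw [hasPeriod_iff_getElem?] at h
  have key := h (w.length - p) (by simp; omega)
  rw [getElem?_append_left (by omega), show w.length - p + p = w.length by omega,
    getElem?_concat_length] at key
  exact key

theorem HasPeriod.eq_of_append_singleton {w : List α} {y y' : α} {p q : ℕ}
    (hp : (w ++ [y]).HasPeriod p) (hq : (w ++ [y']).HasPeriod q) (p_pos : 0 < p) (q_pos : 0 < q)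
    (h : p + q ≤ w.length) : y = y' := by
  have hy := hp.getElem?_length_sub_of_append_singleton p_pos (by omega)
  have hy' := hq.getElem?_length_sub_of_append_singleton q_pos (by omega)
  have hwp : w.HasPeriod p := hp.infix (prefix_append w [y]).isInfix
  have hwq : w.HasPeriod q := hq.infix (prefix_append w [y']).isInfix
  rw [hwp.getElem?_length_sub_eq hwq p_pos q_pos h, hy'] at hy
  exact Option.some_injective _ hy.symm

end List

namespace CyclicWords

variable {n : ℕ}

theorem Word.bar_cons_append (x y : Letter n) (W : Word n) :
    Word.bar (x :: W ++ [y]) = Letter.bar y :: Word.bar W ++ [Letter.bar x] := by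
  simp [Word.bar]

theorem Word.bar_bar (W : Word n) : Word.bar (Word.bar W) = W := by
  simp [Word.bar, Letter.bar, Function.comp_def]

theorem Word.hasPeriod_bar {W : Word n} {p : ℕ} (h : W.HasPeriod p) :
    (Word.bar W).HasPeriod p :=
  (h.map Letter.bar).reverse

theorem SubwordPow.hasPeriod {P : Word n} {𝒲 : CWord n} {j : ℕ} (h : SubwordPow P 𝒲 j) :
    P.HasPeriod (clen 𝒲) := by
  obtain ⟨W, rfl, hP⟩ := h
  simpa [clen, cyc] using (List.hasPeriod_flatten_replicate W j).infix hP

section LinkedLength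

variable {𝒪 : CWord n} {P Q : Word n} {a b : ℕ}

theorem LinkedType2.length_le (h : LinkedType2 𝒪 P Q) (hP : P.HasPeriod a) (hQ : Q.HasPeriod b)
    (a_pos : 0 < a) (b_pos : 0 < b) : P.length ≤ a + b + 1 ∧ Q.length ≤ a + b + 1 := by
  obtain ⟨p₁, p₂, q₁, q₂, Y, -, rfl, rfl, -, hp₂q₂, -⟩ := h
  have hY : Y.length < a + b := by
    by_contra! hY
    exact hp₂q₂ (List.HasPeriod.eq_of_append_singleton
      (hP.infix (List.suffix_cons p₁ _).isInfix) (hQ.infix (List.suffix_cons q₁ _).isInfix)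
      a_pos b_pos hY)
  simp only [List.length_append, List.length_cons, List.length_nil]
  omega

theorem LinkedType3.length_le (h : LinkedType3 𝒪 P Q) (hP : P.HasPeriod a) (hQ : Q.HasPeriod b)
    (a_pos : 0 < a) (b_pos : 0 < b) : P.length ≤ a + b + 1 ∧ Q.length ≤ a + b + 1 := by
  obtain ⟨p₁, p₂, q₁, q₂, Y, -, rfl, rfl, -, hp₂q₁, -⟩ := h
  have hQbar := Word.hasPeriod_bar hQ
  rw [Word.bar_cons_append, Word.bar_bar] at hQbar
  have hY : Y.length < a + b := by
    by_contra! hY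
    exact hp₂q₁ (List.HasPeriod.eq_of_append_singleton
      (hP.infix (List.suffix_cons p₁ _).isInfix)
      (hQbar.infix (List.suffix_cons (Letter.bar q₂) _).isInfix) a_pos b_pos hY)
  simp only [List.length_append, List.length_cons, List.length_nil, Word.bar,
    List.length_reverse, List.length_map]
  omega

theorem length_le_of_linked (h : LinkedType1 𝒪 P Q ∨ LinkedType2 𝒪 P Q ∨ LinkedType3 𝒪 P Q)
    (hP : P.HasPeriod a) (hQ : Q.HasPeriod b) (a_pos : 0 < a) (b_pos : 0 < b) :
    P.length ≤ a + b + 1 ∧ Q.length ≤ a + b + 1 := by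
  rcases h with ⟨p₁, p₂, q₁, q₂, rfl, rfl, -⟩ | h | h
  · simp only [List.length_cons, List.length_nil]
    omega
  · exact h.length_le hP hQ a_pos b_pos
  · exact h.length_le hP hQ a_pos b_pos

end LinkedLength

theorem natCast_le_two_add_div {K : Type*} [Field K] [LinearOrder K] [IsStrictOrderedRing K]
    {j a c L : ℕ} (a_pos : 0 < a) (hlow : (j - 1) * a < L) (hup : L ≤ a + c + 1) :
    (j : K) ≤ 2 + c / a := by
  have hj : j * a ≤ (j - 1) * a + a := by
    rw [← add_one_mul]
    exact Nat.mul_le_mul_right a (by omega)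
  have hja : (j : K) * a ≤ 2 * a + c := by exact_mod_cast (by omega : j * a ≤ 2 * a + c)
  have ha : (0 : K) < a := by exact_mod_cast a_pos
  rw [show (2 : K) + c / a = (2 * a + c) / a by field_simp, le_div_iff₀ ha]
  exact hja

theorem lp2_exponent_bounds_general (n : ℕ) (𝒪 𝒱 𝒲 : CWord n) (P Q : Word n) (h : LP2 𝒪 𝒱 𝒲 P Q) :
    ∃ j k : ℕ, 0 < j ∧ 0 < k ∧ SubwordPow P 𝒱 j ∧ SubwordPow Q 𝒲 k ∧
      (j - 1) * clen 𝒱 < P.length ∧ P.length ≤ j * clen 𝒱 ∧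
      (k - 1) * clen 𝒲 < Q.length ∧ Q.length ≤ k * clen 𝒲 ∧
      (j : ℚ) ≤ 2 + (clen 𝒲 : ℚ) / (clen 𝒱 : ℚ) ∧
      (k : ℚ) ≤ 2 + (clen 𝒱 : ℚ) / (clen 𝒲 : ℚ) := by
  obtain ⟨⟨-, -, hP₂, hQ₂, hlinked⟩, j, k, hj, hk, hPV, hQW, hPlow, hPup, hQlow, hQup⟩ := h
  have hV : 0 < clen 𝒱 := Nat.pos_of_ne_zero fun h0 => by rw [h0, mul_zero] at hPup; omega
  have hW : 0 < clen 𝒲 := Nat.pos_of_ne_zero fun h0 => by rw [h0, mul_zero] at hQup; omega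
  obtain ⟨hPlen, hQlen⟩ := length_le_of_linked hlinked hPV.hasPeriod hQW.hasPeriod hV hW
  refine ⟨j, k, hj, hk, hPV, hQW, hPlow, hPup, hQlow, hQup, ?_, ?_⟩
  · exact natCast_le_two_add_div hV hPlow hPlen
  · exact natCast_le_two_add_div hW hQlow (by omega)

/-- For `(P,Q) ∈ 𝕃ℙ₂(𝒱,𝒲)`, the positive integers `j`, `k`
witnessing the definition can be chosen with `j ≤ 2 + l(𝒲)/l(𝒱)` and
`k ≤ 2 + l(𝒱)/l(𝒲)`. -/
theorem lp2_exponent_bounds (n : ℕ) (𝒪 𝒱 𝒲 : CWord n) (h𝒪 : SurfaceSymbol 𝒪)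
    (hV : CReduced 𝒱) (hW : CReduced 𝒲) (P Q : Word n) (h : LP2 𝒪 𝒱 𝒲 P Q) :
    ∃ j k : ℕ, 0 < j ∧ 0 < k ∧ SubwordPow P 𝒱 j ∧ SubwordPow Q 𝒲 k ∧
      (j - 1) * clen 𝒱 < P.length ∧ P.length ≤ j * clen 𝒱 ∧
      (k - 1) * clen 𝒲 < Q.length ∧ Q.length ≤ k * clen 𝒲 ∧
      (j : ℚ) ≤ 2 + (clen 𝒲 : ℚ) / (clen 𝒱 : ℚ) ∧
      (k : ℚ) ≤ 2 + (clen 𝒱 : ℚ) / (clen 𝒲 : ℚ) :=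
  lp2_exponent_bounds_general n 𝒪 𝒱 𝒲 P Q h

end CyclicWords
end
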